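/- arXiv:2003.05485 — 4 statements merged into one kernel-verified Lean document; each statement's English description precedes it below -/
import Mathlib

section
/- Let θ > 0 and u₀ > 0. Define s = θ⁻¹ ln(θu₀ + 1 + ((θu₀ + 1)² − 1)^{1/2}) and u(x) = θ⁻¹(cosh(θ(x − s)) − 1). Then s > 0 and u is an exact solution of the obstacle free boundary problem: u''(x) = θ(1 + (u'(x))²)^{1/2} for all x ∈ (0, s), u(0) = u₀, u(s) = 0, and u'(s) = 0. -/
/-! The solution is the catenary `u(x) = θ⁻¹ (cosh (θ (x - s)) - 1)`: its derivative is
`sinh (θ (x - s))`, and `1 + sinh² = cosh²` turns the equation into `θ cosh = θ cosh`. The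
detachment point is `s = θ⁻¹ arcosh (θ u₀ + 1)`, chosen so that `u(0) = u₀`; it is positive
because `θ u₀ + 1 > 1`. -/

open Real

lemma hasDerivAt_mul_sub (θ c x : ℝ) : HasDerivAt (fun x => θ * (x - c)) θ x := by
  simpa using ((hasDerivAt_id x).sub_const c).const_mul θ

lemma hasDerivAt_catenary {θ : ℝ} (hθ : θ ≠ 0) (c x : ℝ) :
    HasDerivAt (fun x => θ⁻¹ * (cosh (θ * (x - c)) - 1)) (sinh (θ * (x - c))) x :=
  ((((hasDerivAt_cosh _).comp x (hasDerivAt_mul_sub θ c x)).sub_const 1).const_mul θ⁻¹).congr_deriv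
    (by field_simp)

lemma deriv_catenary {θ : ℝ} (hθ : θ ≠ 0) (c : ℝ) :
    deriv (fun x => θ⁻¹ * (cosh (θ * (x - c)) - 1)) = fun x => sinh (θ * (x - c)) :=
  funext fun x => (hasDerivAt_catenary hθ c x).deriv

lemma deriv_sinh_mul_sub (θ c x : ℝ) :
    deriv (fun x => sinh (θ * (x - c))) x = θ * cosh (θ * (x - c)) :=
  ((hasDerivAt_sinh _).comp x (hasDerivAt_mul_sub θ c x)).deriv.trans (mul_comm _ _)

lemma sqrt_one_add_sinh_sq (y : ℝ) : √(1 + sinh y ^ 2) = cosh y := by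
  rw [← cosh_sq', sqrt_sq (cosh_pos y).le]

/-- Exact solution of the obstacle problem on a string: for `θ > 0` and
`u₀ > 0`, with `s = θ⁻¹ log(θu₀ + 1 + ((θu₀+1)² - 1)^(1/2))` and
`u(x) = θ⁻¹ (cosh(θ(x - s)) - 1)`, one has `s > 0` and `u` solves
`u'' = θ(1 + (u')²)^(1/2)` on `(0, s)` with `u(0) = u₀`, `u(s) = 0`,
`u'(s) = 0`. -/
theorem obstacle_problem_exact_solution (θ u₀ : ℝ) (hθ : 0 < θ) (hu₀ : 0 < u₀) :
    let s : ℝ := θ⁻¹ * Real.log (θ * u₀ + 1 + Real.sqrt ((θ * u₀ + 1) ^ 2 - 1))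
    let u : ℝ → ℝ := fun x => θ⁻¹ * (Real.cosh (θ * (x - s)) - 1)
    0 < s ∧
    (∀ x ∈ Set.Ioo (0 : ℝ) s,
      deriv (deriv u) x = θ * Real.sqrt (1 + (deriv u x) ^ 2)) ∧
    u 0 = u₀ ∧ u s = 0 ∧ deriv u s = 0 := by
  intro s u
  have ha : 1 < θ * u₀ + 1 := lt_add_of_pos_left 1 (mul_pos hθ hu₀)
  have hs : s = θ⁻¹ * arcosh (θ * u₀ + 1) := rfl
  have hu' : deriv u = fun x => sinh (θ * (x - s)) := deriv_catenary hθ.ne' s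
  refine ⟨mul_pos (inv_pos.2 hθ) (arcosh_pos ha), fun x _ => ?_, ?_, by simp [u], by simp [hu']⟩
  · rw [hu', deriv_sinh_mul_sub, sqrt_one_add_sinh_sq]
  · have hθs : θ * (0 - s) = -arcosh (θ * u₀ + 1) := by
      rw [hs]; field_simp; ring
    simp only [u, hθs, cosh_neg, cosh_arcosh ha.le]
    field_simp
    ring
end

section
/- Let θ > 0 and u₀ > 0. Suppose s > 0 and u : ℝ → ℝ is twice continuously differentiable on [0, s] and satisfies u''(x) = θ(1 + (u'(x))²)^{1/2} on (0, s), u(0) = u₀, u(s) = 0, and u'(s) = 0. Then necessarily u(x) = θ⁻¹(cosh(θ(x − s)) − 1) for all x ∈ [0, s] and s = θ⁻¹ ln(θu₀ + 1 + ((θu₀ + 1)² − 1)^{1/2}); in particular, the free boundary s and the solution u are unique. -/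
/-!
Since `arsinh' p = (1 + p²)^(-1/2)`, the equation says that `arsinh (u' x) - θ x` is constant, so
`u'(s) = 0` gives `u' x = sinh (θ (x - s))`; integrating once more with `u(s) = 0` gives the `cosh`
profile. Then `u(0) = u₀` reads `cosh (θ s) = θ u₀ + 1`, and since `θ s ≥ 0` this is inverted by
`arcosh`, whose defining formula is the stated logarithm.
-/

open Set Real

theorem eq_of_hasDerivAt_zero_of_continuousOn_Icc {f : ℝ → ℝ} {a b : ℝ}
    (hf : ContinuousOn f (Icc a b)) (hf' : ∀ x ∈ Ioo a b, HasDerivAt f 0 x) :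
    ∀ x ∈ Icc a b, f x = f b := by
  intro x ⟨hax, hxb⟩
  rcases hxb.eq_or_lt with rfl | hlt
  · rfl
  obtain ⟨_, _, hslope⟩ := exists_hasDerivAt_eq_slope f (fun _ => 0) hlt
    (hf.mono (Icc_subset_Icc_left hax))
    (fun y hy => hf' y (Ioo_subset_Ioo_left hax hy))
  rw [eq_comm, div_eq_zero_iff, sub_eq_zero] at hslope
  exact (hslope.resolve_right (sub_ne_zero.2 hlt.ne')).symm

theorem eq_sinh_of_hasDerivAt_mul_sqrt_one_add_sq {v : ℝ → ℝ} {θ a b : ℝ}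
    (hv : ContinuousOn v (Icc a b))
    (hv' : ∀ x ∈ Ioo a b, HasDerivAt v (θ * √(1 + v x ^ 2)) x) :
    ∀ x ∈ Icc a b, v x = sinh (θ * (x - b) + arsinh (v b)) := by
  have hconst := eq_of_hasDerivAt_zero_of_continuousOn_Icc (f := fun x => arsinh (v x) - θ * x)
    ((continuous_arsinh.comp_continuousOn hv).sub (continuousOn_const.mul continuousOn_id))
    fun x hx => by
      have hsqrt : √(1 + v x ^ 2) ≠ 0 := (sqrt_pos.2 (by positivity)).ne'
      refine (((hasDerivAt_arsinh _).comp x (hv' x hx)).sub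
        ((hasDerivAt_id x).const_mul θ)).congr_deriv ?_
      field_simp
      ring
  intro x hx
  rw [← sinh_arsinh (v x)]
  congr 1
  linarith [hconst x hx]

theorem sub_eq_cosh_of_hasDerivAt_sinh {w : ℝ → ℝ} {θ a b : ℝ} (hθ : θ ≠ 0)
    (hw : ContinuousOn w (Icc a b))
    (hw' : ∀ x ∈ Ioo a b, HasDerivAt w (sinh (θ * (x - b))) x) :
    ∀ x ∈ Icc a b, w x - w b = θ⁻¹ * (cosh (θ * (x - b)) - 1) := by
  have hconst := eq_of_hasDerivAt_zero_of_continuousOn_Icc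
    (f := fun x => w x - θ⁻¹ * cosh (θ * (x - b)))
    (hw.sub (by fun_prop))
    fun x hx => by
      have hcosh := (((hasDerivAt_id x).sub_const b).const_mul θ).cosh.const_mul θ⁻¹
      refine ((hw' x hx).sub hcosh).congr_deriv ?_
      field_simp
      simp
  intro x hx
  have := hconst x hx
  simp only [sub_self, mul_zero, cosh_zero] at this
  linear_combination this

theorem obstacle_problem_uniqueness_general
    (θ u₀ : ℝ) (hθ : 0 < θ) (s : ℝ) (hs : 0 < s) (u : ℝ → ℝ)
    (hdiff : ∀ x ∈ Set.Icc (0 : ℝ) s,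
      DifferentiableAt ℝ u x ∧ DifferentiableAt ℝ (deriv u) x)
    (hode : ∀ x ∈ Set.Ioo (0 : ℝ) s,
      deriv (deriv u) x = θ * Real.sqrt (1 + (deriv u x) ^ 2))
    (h0 : u 0 = u₀) (hsB : u s = 0) (hsC : deriv u s = 0) :
    (∀ x ∈ Set.Icc (0 : ℝ) s, u x = θ⁻¹ * (Real.cosh (θ * (x - s)) - 1)) ∧
    s = θ⁻¹ * Real.log (θ * u₀ + 1 + Real.sqrt ((θ * u₀ + 1) ^ 2 - 1)) := by
  have hu' : ∀ x ∈ Icc 0 s, deriv u x = sinh (θ * (x - s)) := by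
    simpa [hsC] using eq_sinh_of_hasDerivAt_mul_sqrt_one_add_sq
      (fun x hx => (hdiff x hx).2.continuousAt.continuousWithinAt)
      fun x hx => hode x hx ▸ (hdiff x (Ioo_subset_Icc_self hx)).2.hasDerivAt
  have hu : ∀ x ∈ Icc 0 s, u x = θ⁻¹ * (cosh (θ * (x - s)) - 1) := by
    simpa [hsB] using sub_eq_cosh_of_hasDerivAt_sinh hθ.ne'
      (fun x hx => (hdiff x hx).1.continuousAt.continuousWithinAt)
      fun x hx => hu' x (Ioo_subset_Icc_self hx) ▸
        (hdiff x (Ioo_subset_Icc_self hx)).1.hasDerivAt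
  refine ⟨hu, ?_⟩
  have hcosh : cosh (θ * s) = θ * u₀ + 1 := by
    have := hu 0 (left_mem_Icc.2 hs.le)
    rw [h0, zero_sub, mul_neg, cosh_neg] at this
    field_simp at this
    linarith
  calc s = θ⁻¹ * arcosh (cosh (θ * s)) := by
        rw [arcosh_cosh (by positivity)]
        field_simp
    _ = _ := by rw [hcosh, arcosh]

/-- Uniqueness for the obstacle problem on a string: any twice continuously
differentiable solution of `u'' = θ(1 + (u')²)^(1/2)` on `(0, s)` with
`u(0) = u₀`, `u(s) = 0`, `u'(s) = 0` and `s > 0` is necessarily the exact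
solution `u(x) = θ⁻¹ (cosh(θ(x - s)) - 1)`, and the free boundary is
necessarily `s = θ⁻¹ log(θu₀ + 1 + ((θu₀+1)² - 1)^(1/2))`. -/
theorem obstacle_problem_uniqueness
    (θ u₀ : ℝ) (hθ : 0 < θ) (hu₀ : 0 < u₀) (s : ℝ) (hs : 0 < s) (u : ℝ → ℝ)
    (hdiff : ∀ x ∈ Set.Icc (0 : ℝ) s,
      DifferentiableAt ℝ u x ∧ DifferentiableAt ℝ (deriv u) x)
    (hcont : ContinuousOn (deriv (deriv u)) (Set.Icc (0 : ℝ) s))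
    (hode : ∀ x ∈ Set.Ioo (0 : ℝ) s,
      deriv (deriv u) x = θ * Real.sqrt (1 + (deriv u x) ^ 2))
    (h0 : u 0 = u₀) (hsB : u s = 0) (hsC : deriv u s = 0) :
    (∀ x ∈ Set.Icc (0 : ℝ) s, u x = θ⁻¹ * (Real.cosh (θ * (x - s)) - 1)) ∧
    s = θ⁻¹ * Real.log (θ * u₀ + 1 + Real.sqrt ((θ * u₀ + 1) ^ 2 - 1)) :=
  obstacle_problem_uniqueness_general θ u₀ hθ s hs u hdiff hode h0 hsB hsC
end

section
/- Let u : ℝ → ℝ be twice differentiable on an interval I and satisfy u''(x) = −1 − u(x) − (u'(x))² for all x ∈ I. Then the quantity E(x) = ((u'(x))² + u(x) + 1/2) · e^{2u(x)} is constant on I. -/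
/-! The energy `E = (u'² + u + 1/2) e^{2u}` comes from the integrating factor `e^{2u}`: along
any twice differentiable path, `E' = 2 u' e^{2u} (u'' + 1 + u + u'²)`, which vanishes along
solutions of the ODE, and a function with zero derivative on an interval is constant there. -/

open Real

theorem Convex.is_const_of_hasDerivAt_zero {𝕜 G : Type*} [RCLike 𝕜] [NormedAddCommGroup G]
    [NormedSpace 𝕜 G] {f : 𝕜 → G} {s : Set 𝕜} (hs : Convex ℝ s)
    (hf : ∀ x ∈ s, HasDerivAt f 0 x) {x y : 𝕜} (hx : x ∈ s) (hy : y ∈ s) : f x = f y := by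
  have h := hs.norm_image_sub_le_of_norm_hasDerivWithin_le
    (fun z hz => (hf z hz).hasDerivWithinAt) (fun _ _ => norm_zero.le) hx hy
  rw [zero_mul, norm_le_zero_iff, sub_eq_zero] at h
  exact h.symm

/-- The energy of a path `u` with velocity `v`. -/
noncomputable def freeBoundaryEnergy (u v : ℝ → ℝ) (x : ℝ) : ℝ :=
  (v x ^ 2 + u x + 1 / 2) * exp (2 * u x)

theorem hasDerivAt_freeBoundaryEnergy {u v : ℝ → ℝ} {x a : ℝ} (hu : HasDerivAt u (v x) x)
    (hv : HasDerivAt v a x) :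
    HasDerivAt (freeBoundaryEnergy u v) (2 * v x * exp (2 * u x) * (a + 1 + u x + v x ^ 2)) x := by
  have hexp : HasDerivAt (fun x => exp (2 * u x)) (exp (2 * u x) * (2 * v x)) x :=
    (hu.const_mul 2).exp
  refine ((((hv.fun_pow 2).fun_add hu).add_const (1 / 2)).fun_mul hexp).congr_deriv ?_
  ring

/-- Conservation law for the dynamical free boundary problem: along any twice
differentiable solution of `u'' = -1 - u - (u')²` on an interval `I`, the
quantity `E(x) = ((u'(x))² + u(x) + 1/2) e^(2u(x))` is constant on `I`. -/
theorem dynamical_problem_energy_conserved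
    (u : ℝ → ℝ) (I : Set ℝ) (hI : Set.OrdConnected I)
    (hdiff : ∀ x ∈ I,
      DifferentiableAt ℝ u x ∧ DifferentiableAt ℝ (deriv u) x)
    (hode : ∀ x ∈ I,
      deriv (deriv u) x = -1 - u x - (deriv u x) ^ 2) :
    ∀ x ∈ I, ∀ y ∈ I,
      ((deriv u x) ^ 2 + u x + 1 / 2) * Real.exp (2 * u x)
        = ((deriv u y) ^ 2 + u y + 1 / 2) * Real.exp (2 * u y) := by
  intro x hx y hy
  refine hI.convex.is_const_of_hasDerivAt_zero (f := freeBoundaryEnergy u (deriv u))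
    (fun z hz => ?_) hx hy
  have hE := hasDerivAt_freeBoundaryEnergy (hdiff z hz).1.hasDerivAt (hdiff z hz).2.hasDerivAt
  rw [hode z hz] at hE
  refine hE.congr_deriv ?_
  ring
end

section
/- Let s > 0 and let u : ℝ → ℝ be twice differentiable on [0, s] and satisfy u''(x) = −u(x) · e^{−u(x)} on (0, s), with u(0) = 0, u(s) = 1, and u'(s) = 0. Then, by conservation of energy, the initial velocity satisfies (u'(0))² = 2 − 4e^{−1}; that is, u'(0) = ±(2 − 4e^{−1})^{1/2} (numerically ±0.726967811…). -/
/-! The energy `(u')²/2 + V(u)`, with `V(u) = -(u + 1)e^{-u}` a primitive of `u e^{-u}`, is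
constant along solutions. At `x = s` it equals `-2e⁻¹`, at `x = 0` it equals `(u'(0))²/2 - 1`. -/

open Set Real

theorem hasDerivAt_energy {u V V' : ℝ → ℝ} {x : ℝ} (hu : DifferentiableAt ℝ u x)
    (hu' : DifferentiableAt ℝ (deriv u) x) (hV : HasDerivAt V (V' (u x)) (u x))
    (hode : deriv (deriv u) x = -V' (u x)) :
    HasDerivAt (fun y => deriv u y ^ 2 / 2 + V (u y)) 0 x := by
  have hkin := (hu'.hasDerivAt.fun_pow 2).div_const 2
  have hpot := hV.comp x hu.hasDerivAt
  refine (hkin.add hpot).congr_deriv ?_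
  rw [hode]
  push_cast
  ring

theorem energy_eq_of_ode {u V V' : ℝ → ℝ} {a b : ℝ} (hab : a < b)
    (hdiff : ∀ x ∈ Icc a b, DifferentiableAt ℝ u x ∧ DifferentiableAt ℝ (deriv u) x)
    (hV : ∀ y, HasDerivAt V (V' y) y)
    (hode : ∀ x ∈ Ioo a b, deriv (deriv u) x = -V' (u x)) :
    deriv u a ^ 2 / 2 + V (u a) = deriv u b ^ 2 / 2 + V (u b) := by
  have hcont : ContinuousOn (fun y => deriv u y ^ 2 / 2 + V (u y)) (Icc a b) := fun x hx =>
    ((((hdiff x hx).2.continuousAt.pow 2).div_const 2).add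
      ((hV (u x)).continuousAt.comp (hdiff x hx).1.continuousAt)).continuousWithinAt
  obtain ⟨c, -, hc⟩ := exists_hasDerivAt_eq_slope _ (fun _ => 0) hab hcont fun x hx =>
    hasDerivAt_energy (hdiff x (Ioo_subset_Icc_self hx)).1 (hdiff x (Ioo_subset_Icc_self hx)).2
      (hV (u x)) (hode x hx)
  rw [eq_comm, div_eq_zero_iff, sub_eq_zero] at hc
  exact (hc.resolve_right (sub_ne_zero.2 hab.ne')).symm

theorem hasDerivAt_neg_add_one_mul_exp_neg (y : ℝ) :
    HasDerivAt (fun y => -(y + 1) * exp (-y)) (y * exp (-y)) y := by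
  have h := (((hasDerivAt_id' y).add_const 1).fun_neg).fun_mul (hasDerivAt_neg y).exp
  refine h.congr_deriv ?_
  ring

theorem eq_sqrt_or_eq_neg_sqrt_of_sq_eq {x c : ℝ} (h : x ^ 2 = c) :
    x = √c ∨ x = -√c := by
  rw [← sq_eq_sq_iff_eq_or_eq_neg, sq_sqrt (h ▸ sq_nonneg x), h]

/-- Initial velocity for Na's free boundary problem: if `u` is twice
differentiable on `[0, s]` and satisfies `u'' = -u e^(-u)` on `(0, s)`, with
`u(0) = 0`, `u(s) = 1` and `u'(s) = 0`, then `(u'(0))² = 2 - 4e⁻¹`, that is,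
`u'(0) = ±(2 - 4e⁻¹)^(1/2)`. -/
theorem na_problem_initial_velocity
    (s : ℝ) (hs : 0 < s) (u : ℝ → ℝ)
    (hdiff : ∀ x ∈ Set.Icc (0 : ℝ) s,
      DifferentiableAt ℝ u x ∧ DifferentiableAt ℝ (deriv u) x)
    (hode : ∀ x ∈ Set.Ioo (0 : ℝ) s,
      deriv (deriv u) x = -u x * Real.exp (-u x))
    (h0 : u 0 = 0) (hs1 : u s = 1) (hs2 : deriv u s = 0) :
    (deriv u 0) ^ 2 = 2 - 4 * Real.exp (-1) ∧
    (deriv u 0 = Real.sqrt (2 - 4 * Real.exp (-1)) ∨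
      deriv u 0 = -Real.sqrt (2 - 4 * Real.exp (-1))) := by
  have henergy := energy_eq_of_ode hs hdiff hasDerivAt_neg_add_one_mul_exp_neg
    fun x hx => by rw [hode x hx, neg_mul]
  rw [h0, hs1, hs2] at henergy
  have hsq : deriv u 0 ^ 2 = 2 - 4 * exp (-1) := by
    norm_num at henergy
    linarith
  exact ⟨hsq, eq_sqrt_or_eq_neg_sqrt_of_sq_eq hsq⟩
end
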